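/- Let G₁ and G₂ be finite simple graphs, each with at least one vertex, such that at least one of them has no isolated vertices. Then for any finite simple graph H, ξ((G₁ + G₂)⊙H) = n(G₁) + n(G₂), where G₁ + G₂ denotes the join of G₁ and G₂. -/

import Mathlib

universe u v

variable {V : Type u} {W : Type v}

/-- A distance-equalizer set of a graph: for every pair of distinct vertices outside `S`
there is a vertex of `S` equidistant to both. -/
def IsDistEqSet {α : Type*} (G : SimpleGraph α) (S : Set α) : Prop :=
  ∀ ⦃x y : α⦄, x ∉ S → y ∉ S → x ≠ y → ∃ w ∈ S, G.dist w x = G.dist w y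

/-- The equidistant dimension of a graph: the minimum cardinality of a distance-equalizer set. -/
noncomputable def eqdim {α : Type*} (G : SimpleGraph α) : ℕ :=
  sInf {n | ∃ S : Set α, IsDistEqSet G S ∧ S.ncard = n}

/-- The bisector of two vertices: vertices equidistant to both. -/
def bisector {α : Type*} (G : SimpleGraph α) (x y : α) : Set α :=
  {w | G.dist w x = G.dist w y}

/-- The empty bisector graph of `G`: two distinct vertices are adjacent iff their bisector
in `G` is empty. -/
def emptyBisector {α : Type*} (G : SimpleGraph α) : SimpleGraph α where
  Adj x y := x ≠ y ∧ bisector G x y = ∅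
  symm := by
    refine ⟨?_⟩
    rintro x y ⟨h1, h2⟩
    refine ⟨h1.symm, Set.eq_empty_iff_forall_notMem.mpr fun w hw => ?_⟩
    exact Set.eq_empty_iff_forall_notMem.mp h2 w
      ((show G.dist w y = G.dist w x from hw).symm)
  loopless := ⟨fun _ h => h.1 rfl⟩

/-- A vertex cover of a graph: a set of vertices meeting every edge. -/
def IsVertexCover {α : Type*} (G : SimpleGraph α) (C : Set α) : Prop :=
  ∀ ⦃x y : α⦄, G.Adj x y → x ∈ C ∨ y ∈ C

/-- An independent set of a graph: a set of pairwise non-adjacent vertices. -/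
def IsIndepSet {α : Type*} (G : SimpleGraph α) (A : Set α) : Prop :=
  ∀ ⦃x y : α⦄, x ∈ A → y ∈ A → ¬ G.Adj x y

/-- The vertex cover number `β(G)`. -/
noncomputable def vcNum {α : Type*} (G : SimpleGraph α) : ℕ :=
  sInf {n | ∃ C : Set α, IsVertexCover G C ∧ C.ncard = n}

/-- The independence number `α(G)`. -/
noncomputable def indepNum {α : Type*} (G : SimpleGraph α) : ℕ :=
  sSup {n | ∃ A : Set α, IsIndepSet G A ∧ A.ncard = n}

/-- A forward-equalized pair `(X, Y)` of `G`: `X ∪ Y = V(G)` and for every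
`a ∈ X \ Y` and `b ∈ Y \ X` there is `w` with `d(w,a) = d(w,b) + 1`. -/
def IsForwardEqualizedPair {α : Type*} (G : SimpleGraph α) (X Y : Set α) : Prop :=
  X ∪ Y = Set.univ ∧
  ∀ ⦃a⦄, a ∈ X \ Y → ∀ ⦃b⦄, b ∈ Y \ X → ∃ w, G.dist w a = G.dist w b + 1

/-- `β*(G)`: the minimum of `|X ∩ Y|` over all pairs of vertex covers `X, Y` of the
empty bisector graph of `G` such that `(X, Y)` is a forward-equalized pair of `G`. -/
noncomputable def betaStar {α : Type*} (G : SimpleGraph α) : ℕ :=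
  sInf {n | ∃ X Y : Set α,
    IsVertexCover (emptyBisector G) X ∧ IsVertexCover (emptyBisector G) Y ∧
    IsForwardEqualizedPair G X Y ∧ (X ∩ Y).ncard = n}

/-- The corona product `G ⊙ H`: one copy of `H` for each vertex `i` of `G` (the vertices
`Sum.inr (i, w)`), with `i` joined to every vertex of its copy. -/
def corona (G : SimpleGraph V) (H : SimpleGraph W) : SimpleGraph (V ⊕ V × W) where
  Adj x y :=
    match x, y with
    | Sum.inl a, Sum.inl b => G.Adj a b
    | Sum.inl a, Sum.inr p => a = p.1
    | Sum.inr p, Sum.inl a => a = p.1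
    | Sum.inr p, Sum.inr q => p.1 = q.1 ∧ H.Adj p.2 q.2
  symm := by
    refine ⟨?_⟩
    rintro (a | p) (b | q) h
    · exact h.symm
    · exact h
    · exact h
    · exact ⟨h.1.symm, h.2.symm⟩
  loopless := by
    refine ⟨?_⟩
    rintro (a | p) h
    · exact G.loopless.irrefl a h
    · exact H.loopless.irrefl p.2 h.2
/-- The join `G₁ + G₂` of two graphs: disjoint union together with all edges between the
two vertex sets. -/
def joinGraph {V₁ : Type u} {V₂ : Type v} (G₁ : SimpleGraph V₁) (G₂ : SimpleGraph V₂) :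
    SimpleGraph (V₁ ⊕ V₂) where
  Adj x y :=
    match x, y with
    | Sum.inl a, Sum.inl b => G₁.Adj a b
    | Sum.inr a, Sum.inr b => G₂.Adj a b
    | Sum.inl _, Sum.inr _ => True
    | Sum.inr _, Sum.inl _ => True
  symm := by
    refine ⟨?_⟩
    rintro (a | a) (b | b) h
    · exact h.symm
    · trivial
    · trivial
    · exact h.symm
  loopless := by
    refine ⟨?_⟩
    rintro (a | a) h
    · exact G₁.loopless.irrefl a h
    · exact G₂.loopless.irrefl a h

/-!
A shortest path from outside the closed copy `{vᵢ} ∪ V(Hᵢ)` to a vertex of `Hᵢ` has to enter through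
`vᵢ`, so `d(s, (i, w)) = d(s, vᵢ) + 1`. Hence a vertex equidistant to `vᵢ` and `(i, w)` lies in the
closed copy of `i`, and every distance-equalizer set meets each of the `n(G)` disjoint closed copies.
Conversely, if any two distinct vertices `i ≠ j` of `G` have a common neighbour `a`, then
`vₐ` is at distance `2` from both `(i, w)` and `(j, w')` (and for `i = j` take `vᵢ` itself), so the
root vertices form a distance-equalizer set. In `G₁ + G₂` any two vertices have a common neighbour
as soon as one of the factors has no isolated vertex.
-/

open SimpleGraph

theorem eqdim_eq_ncard {α : Type*} {G : SimpleGraph α} {S : Set α} (hS : IsDistEqSet G S)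
    (hmin : ∀ T, IsDistEqSet G T → S.ncard ≤ T.ncard) : eqdim G = S.ncard :=
  le_antisymm (Nat.sInf_le ⟨S, hS, rfl⟩) (le_csInf ⟨_, S, hS, rfl⟩ (by
    rintro _ ⟨T, hT, rfl⟩
    exact hmin T hT))

theorem connected_of_forall_ne_exists_adj_adj {α : Type*} [Nonempty α] {G : SimpleGraph α}
    (h : ∀ i j, i ≠ j → ∃ a, G.Adj a i ∧ G.Adj a j) : G.Connected where
  preconnected i j := by
    by_cases hij : i = j
    · exact hij ▸ Reachable.refl i
    · obtain ⟨a, hai, haj⟩ := h i j hij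
      exact hai.reachable.symm.trans haj.reachable

namespace corona

variable {G : SimpleGraph V} {H : SimpleGraph W}

theorem adj_inl_inl {a b : V} : (corona G H).Adj (.inl a) (.inl b) ↔ G.Adj a b := Iff.rfl

theorem adj_inr_iff {x : V ⊕ V × W} {i : V} {y : W} :
    (corona G H).Adj x (.inr (i, y)) ↔ x = .inl i ∨ ∃ z, x = .inr (i, z) ∧ H.Adj z y := by
  rcases x with a | ⟨j, z⟩
  · exact ⟨fun h => .inl (congrArg Sum.inl h), by rintro (h | ⟨_, h, _⟩) <;> cases h; rfl⟩
  · refine ⟨fun h => .inr ⟨z, by rw [show j = i from h.1], h.2⟩, ?_⟩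
    rintro (h | ⟨z', h, hz'⟩) <;> cases h
    exact ⟨rfl, hz'⟩

/-- The vertex `i` of `G` whose closed copy `{vᵢ} ∪ V(Hᵢ)` contains `x`. -/
def root : V ⊕ V × W → V := Sum.elim id Prod.fst

theorem connected (hG : G.Connected) : (corona G H).Connected := by
  have hroot : ∀ x, (corona G H).Reachable x (.inl (root x)) := by
    rintro (a | ⟨i, w⟩)
    · exact .refl _
    · exact Adj.reachable (show i = i from rfl)
  obtain ⟨v⟩ := hG.nonempty
  refine (connected_iff_exists_forall_reachable _).mpr ⟨.inl v, fun x => ?_⟩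
  exact ((hG v (root x)).map ⟨Sum.inl, fun h => h⟩).trans (hroot x).symm

theorem inl_mem_support {s : V ⊕ V × W} {i : V} {w : W}
    (p : (corona G H).Walk s (.inr (i, w))) (hs : ∀ x, s ≠ .inr (i, x)) :
    .inl i ∈ p.support := by
  obtain ⟨d, hd, hfst, hsnd⟩ :=
    p.exists_boundary_dart {x | ∀ y, x ≠ .inr (i, y)} hs (by simp)
  obtain ⟨y, hy⟩ : ∃ y, d.snd = .inr (i, y) := by simpa using hsnd
  have hadj := d.adj
  rw [hy, adj_inr_iff] at hadj
  obtain h | ⟨z, h, -⟩ := hadj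
  · exact h ▸ p.dart_fst_mem_support_of_mem_darts hd
  · exact absurd h (hfst z)

theorem dist_inr (hG : G.Connected) {s : V ⊕ V × W} {i : V} (hs : ∀ x, s ≠ .inr (i, x))
    (w : W) : (corona G H).dist s (.inr (i, w)) = (corona G H).dist s (.inl i) + 1 := by
  classical
  have hadj : (corona G H).Adj (.inl i) (.inr (i, w)) := rfl
  refine le_antisymm ?_ ?_
  · simpa [dist_eq_one_iff_adj.mpr hadj] using hadj.reachable.dist_triangle_right s
  · obtain ⟨p, hp⟩ := (connected hG).exists_walk_length_eq_dist s (.inr (i, w))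
    have hmem := inl_mem_support p hs
    calc (corona G H).dist s (.inl i) + 1 ≤ (p.takeUntil _ hmem).length + 1 :=
          Nat.add_le_add_right (dist_le _) 1
      _ ≤ p.length := Walk.length_takeUntil_lt_length hmem (by simp)
      _ = _ := hp

theorem exists_mem_root_eq [Nonempty W] (hG : G.Connected) {S : Set (V ⊕ V × W)}
    (hS : IsDistEqSet (corona G H) S) (i : V) : ∃ s ∈ S, root s = i := by
  by_contra! h
  obtain ⟨w⟩ := ‹Nonempty W›
  obtain ⟨s, hsS, hs⟩ := hS (x := .inl i) (y := .inr (i, w)) (fun hi => h _ hi rfl)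
    (fun hw => h _ hw rfl) Sum.inl_ne_inr
  have hout : ∀ x, s ≠ .inr (i, x) := fun x hx => h s hsS (hx ▸ rfl)
  rw [dist_inr hG hout] at hs
  omega

theorem card_le_ncard [Finite V] [Finite W] [Nonempty W] (hG : G.Connected)
    {S : Set (V ⊕ V × W)} (hS : IsDistEqSet (corona G H) S) : Nat.card V ≤ S.ncard := by
  have himage : root '' S = Set.univ :=
    Set.eq_univ_of_forall fun i => exists_mem_root_eq hG hS i
  calc Nat.card V = (root '' S).ncard := by rw [himage, Set.ncard_univ]
    _ ≤ S.ncard := Set.ncard_image_le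

theorem isDistEqSet_range_inl (hG : G.Connected)
    (hcn : ∀ i j, i ≠ j → ∃ a, G.Adj a i ∧ G.Adj a j) :
    IsDistEqSet (corona G H) (Set.range Sum.inl) := by
  rintro (a | ⟨i, w⟩) (b | ⟨j, w'⟩) hx hy hxy
  any_goals exact absurd (Set.mem_range_self _) ‹_›
  by_cases hij : i = j
  · subst hij
    exact ⟨.inl i, ⟨i, rfl⟩, by rw [dist_inr hG (by simp), dist_inr hG (by simp)]⟩
  · obtain ⟨a, hai, haj⟩ := hcn i j hij
    refine ⟨.inl a, ⟨a, rfl⟩, ?_⟩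
    rw [dist_inr hG (by simp), dist_inr hG (by simp), dist_eq_one_iff_adj.mpr (adj_inl_inl.mpr hai),
      dist_eq_one_iff_adj.mpr (adj_inl_inl.mpr haj)]

theorem eqdim_eq_card [Finite V] [Nonempty V] [Finite W] [Nonempty W]
    (hcn : ∀ i j, i ≠ j → ∃ a, G.Adj a i ∧ G.Adj a j) : eqdim (corona G H) = Nat.card V := by
  have hG := connected_of_forall_ne_exists_adj_adj hcn
  have hcard : (Set.range (Sum.inl : V → V ⊕ V × W)).ncard = Nat.card V :=
    Set.ncard_range_of_injective Sum.inl_injective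
  rw [← hcard]
  exact eqdim_eq_ncard (isDistEqSet_range_inl hG hcn) fun T hT => hcard ▸ card_le_ncard hG hT

end corona

theorem joinGraph_exists_adj_inl_adj_inr {V₁ : Type u} {V₂ : Type v}
    {G₁ : SimpleGraph V₁} {G₂ : SimpleGraph V₂}
    (hiso : (∀ a : V₁, ∃ b : V₁, G₁.Adj a b) ∨ (∀ a : V₂, ∃ b : V₂, G₂.Adj a b))
    (a : V₁) (b : V₂) :
    ∃ c, (joinGraph G₁ G₂).Adj c (.inl a) ∧ (joinGraph G₁ G₂).Adj c (.inr b) := by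
  rcases hiso with h | h
  · obtain ⟨a', ha'⟩ := h a
    exact ⟨.inl a', ha'.symm, trivial⟩
  · obtain ⟨b', hb'⟩ := h b
    exact ⟨.inr b', trivial, hb'.symm⟩

theorem joinGraph_exists_adj_adj {V₁ : Type u} {V₂ : Type v} [Nonempty V₁] [Nonempty V₂]
    {G₁ : SimpleGraph V₁} {G₂ : SimpleGraph V₂}
    (hiso : (∀ a : V₁, ∃ b : V₁, G₁.Adj a b) ∨ (∀ a : V₂, ∃ b : V₂, G₂.Adj a b))
    (i j : V₁ ⊕ V₂) : ∃ c, (joinGraph G₁ G₂).Adj c i ∧ (joinGraph G₁ G₂).Adj c j := by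
  rcases i with a | b <;> rcases j with a' | b'
  · exact ⟨.inr (Classical.arbitrary V₂), trivial, trivial⟩
  · exact joinGraph_exists_adj_inl_adj_inr hiso a b'
  · obtain ⟨c, hc⟩ := joinGraph_exists_adj_inl_adj_inr hiso a' b
    exact ⟨c, hc.symm⟩
  · exact ⟨.inl (Classical.arbitrary V₁), trivial, trivial⟩

/-- If at least one of `G₁`, `G₂` has no isolated vertices, then
`ξ((G₁ + G₂) ⊙ H) = n(G₁) + n(G₂)`. -/
theorem eqdim_join_corona {V₁ : Type u} {V₂ : Type u} {W : Type v}
    [Fintype V₁] [Fintype V₂] [Nonempty V₁] [Nonempty V₂] [Fintype W] [Nonempty W]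
    (G₁ : SimpleGraph V₁) (G₂ : SimpleGraph V₂)
    (hiso : (∀ a : V₁, ∃ b : V₁, G₁.Adj a b) ∨ (∀ a : V₂, ∃ b : V₂, G₂.Adj a b))
    (H : SimpleGraph W) :
    eqdim (corona (joinGraph G₁ G₂) H) = Fintype.card V₁ + Fintype.card V₂ := by
  rw [corona.eqdim_eq_card fun i j _ => joinGraph_exists_adj_adj hiso i j, Nat.card_sum,
    Nat.card_eq_fintype_card, Nat.card_eq_fintype_card]
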